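/- arXiv:1609.02098 — 3 statements merged into one kernel-verified Lean document; each statement's English description precedes it below -/
import Mathlib

section
/- Let (X,d,m) be a locally compact metric measure space satisfying the ball condition, and let G denote either ISO(X) or ISO_m(X). Suppose that for every x ∈ X, every s > 0, and every 0 < ξ' < 1 there exists a subgroup Λ of G with Λ ≠ {id} such that every g ∈ Λ satisfies m((X \ Fix(g)) ∩ B_s(x)) ≤ ξ'·m(B_s(x)), where B_s(x) is the open ball. Then G has the small subgroup property. -/
open Metric MeasureTheory ENNReal Set

noncomputable section

/-- Compact-open topology on the isometry group. -/
instance isoCompactOpen (X : Type*) [MetricSpace X] : TopologicalSpace (X ≃ᵢ X) :=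
  TopologicalSpace.induced
    (fun f : X ≃ᵢ X => (⟨f, f.continuous⟩ : C(X, X))) ContinuousMap.compactOpen

/-- The subgroup of measure-preserving isometries. -/
def isoMeasure {X : Type*} [MetricSpace X] [MeasurableSpace X] [BorelSpace X]
    (m : Measure X) : Subgroup (X ≃ᵢ X) where
  carrier := {f | Measure.map f m = m}
  one_mem' := by
    show Measure.map ⇑(1 : X ≃ᵢ X) m = m
    rw [IsometryEquiv.coe_one, Measure.map_id]
  mul_mem' := by
    intro f g hf hg
    show Measure.map ⇑(f * g) m = m
    rw [IsometryEquiv.coe_mul,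
      ← Measure.map_map f.continuous.measurable g.continuous.measurable]
    rw [show Measure.map (⇑g) m = m from hg, show Measure.map (⇑f) m = m from hf]
  inv_mem' := by
    intro f hf
    show Measure.map ⇑f⁻¹ m = m
    conv_lhs => rw [← show Measure.map (⇑f) m = m from hf]
    rw [Measure.map_map f⁻¹.continuous.measurable f.continuous.measurable]
    have h : ⇑f⁻¹ ∘ ⇑f = id := by
      funext y; exact f.symm_apply_apply y
    rw [h, Measure.map_id]

/-- The ball condition: every closed ball is the closure of the open ball. -/
def BallCondition (X : Type*) [MetricSpace X] : Prop :=
  ∀ (x : X) (r : ℝ), 0 < r → closedBall x r = closure (ball x r)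

/-- `GHDistLt A B c` : the Gromov–Hausdorff distance between `A` and `B` is `< c`,
expressed through isometric embeddings into `ℓ^∞(ℕ)`. -/
def GHDistLt {X : Type*} [MetricSpace X] {Y : Type*} [MetricSpace Y]
    (A : Set X) (B : Set Y) (c : ℝ) : Prop :=
  ∃ (f : A → lp (fun _ : ℕ => ℝ) ∞) (g : B → lp (fun _ : ℕ => ℝ) ∞),
    Isometry f ∧ Isometry g ∧
      EMetric.hausdorffEdist (Set.range f) (Set.range g) < ENNReal.ofReal c

/-- `X` has `m`-a.e. Euclidean tangent cones (quantitative form). -/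
def HasAEEuclideanTangents {X : Type*} [MetricSpace X] [MeasurableSpace X]
    (m : Measure X) : Prop :=
  ∃ K : ℕ, ∀ ε : ℝ, 0 < ε →
    m ({x : X | ∃ δ > 0, ∃ k ≤ K, ∀ r : ℝ, 0 < r → r < δ →
        GHDistLt (closedBall x r) (closedBall (0 : EuclideanSpace ℝ (Fin k)) r) (ε * r)}ᶜ) = 0

/-- Condition (a) for a group `G` of isometries. -/
def CondA {X : Type*} [MetricSpace X] [MeasurableSpace X] (m : Measure X)
    (G : Subgroup (X ≃ᵢ X)) : Prop :=
  ∃ (x : X) (s : ℝ) (FIX : ℝ≥0∞), 0 < s ∧ 0 < FIX ∧ FIX < m (ball x s) ∧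
    ∀ g ∈ G, g ≠ 1 → m ({y | g y = y} ∩ ball x s) < FIX

/-- `G` is a Lie group: it admits a `C^∞`-manifold structure modeled on some `ℝⁿ`,
compatible with its topology, making multiplication and inversion smooth. -/
def IsLieGroup (G : Type*) [Group G] [TopologicalSpace G] : Prop :=
  ∃ (n : ℕ) (cs : ChartedSpace (EuclideanSpace ℝ (Fin n)) G),
    @LieGroup ℝ _ (EuclideanSpace ℝ (Fin n)) _ (EuclideanSpace ℝ (Fin n)) _ _
      (modelWithCornersSelf ℝ (EuclideanSpace ℝ (Fin n))) ((⊤ : ℕ∞) : WithTop ℕ∞) G _ _ cs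

end

/-- `G` has the small subgroup property: every neighborhood of the identity contains
a nontrivial subgroup. -/
def HasSmallSubgroups (G : Type*) [Group G] [TopologicalSpace G] : Prop :=
  ∀ U ∈ nhds (1 : G), ∃ H : Subgroup G, (H : Set G) ⊆ U ∧ H ≠ ⊥

/-!
A neighbourhood of the identity in the compact-open topology contains all isometries moving every
point of some compact set `K` by less than `ε`. Cover `K` by finitely many balls of radius `ε / 4`;
as `m` has full support, every ball `B_{ε/2}(y)` with `y ∈ K` has measure at least some `c > 0`.
Put all these balls inside one ball `B_s(x₀)` of finite measure and choose `ξ'` with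
`ξ' · m(B_s(x₀)) < c`. An element `g` of the subgroup `Λ` supplied by the hypothesis cannot then
move all of `B_{ε/2}(y)`, so it fixes some `z` there, and `d(y, g y) ≤ 2 d(y, z) < ε`.
-/

theorem hasSmallSubgroups_subgroup_of_nhds {H : Type*} [Group H] [TopologicalSpace H]
    (G : Subgroup H)
    (h : ∀ U ∈ nhds (1 : H), ∃ Λ : Subgroup H, Λ ≤ G ∧ Λ ≠ ⊥ ∧ (Λ : Set H) ⊆ U) :
    HasSmallSubgroups G := by
  intro U hU
  rw [nhds_induced, Filter.mem_comap] at hU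
  obtain ⟨V, hV, hVU⟩ := hU
  obtain ⟨Λ, hΛG, hΛ, hΛV⟩ := h V hV
  refine ⟨Λ.subgroupOf G, fun g hg => hVU (hΛV hg), ?_⟩
  rwa [Ne, Subgroup.subgroupOf_eq_bot, disjoint_of_le_iff_left_eq_bot hΛG]

theorem isoCompactOpen_nhds_one_hasBasis (X : Type*) [MetricSpace X] :
    (nhds (1 : X ≃ᵢ X)).HasBasis (fun p : Set X × ℝ => IsCompact p.1 ∧ 0 < p.2)
      (fun p => {f | ∀ x ∈ p.1, dist x (f x) < p.2}) :=
  nhds_induced (fun f : X ≃ᵢ X => (⟨f, f.continuous⟩ : C(X, X))) 1 ▸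
    (nhds_basis_uniformity' (Filter.HasBasis.compactConvergenceUniformity
      (Metric.uniformity_basis_dist (α := X)))).comap _

theorem IsCompact.exists_pos_forall_le_measure_ball {X : Type*} [MetricSpace X]
    [MeasurableSpace X] {m : Measure X} (hsupp : ∀ U : Set X, IsOpen U → U.Nonempty → 0 < m U)
    {K : Set X} (hK : IsCompact K) {ρ : ℝ} (hρ : 0 < ρ) :
    ∃ c, 0 < c ∧ ∀ y ∈ K, c ≤ m (ball y ρ) := by
  obtain ⟨t, -, hKt⟩ := hK.elim_nhds_subcover (fun y => ball y (ρ / 2))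
    fun y _ => ball_mem_nhds y (half_pos hρ)
  refine ⟨t.inf fun i => m (ball i (ρ / 2)), ?_, fun y hy => ?_⟩
  · exact (Finset.lt_inf_iff ENNReal.zero_lt_top).2 fun i _ =>
      hsupp _ isOpen_ball ⟨i, mem_ball_self (half_pos hρ)⟩
  · obtain ⟨i, hit, hyi⟩ := mem_iUnion₂.1 (hKt hy)
    calc t.inf (fun i => m (ball i (ρ / 2))) ≤ m (ball i (ρ / 2)) := Finset.inf_le hit
      _ ≤ m (ball y ρ) := measure_mono (ball_subset_ball' (by
          rw [dist_comm]; linarith [mem_ball.1 hyi]))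

theorem ENNReal.exists_ofReal_mul_lt {c M : ℝ≥0∞} (hc : 0 < c) (hM : M ≠ ∞) :
    ∃ ξ : ℝ, 0 < ξ ∧ ξ < 1 ∧ ENNReal.ofReal ξ * M < c := by
  obtain ⟨ξ, -, hξ0, hξ⟩ :=
    ENNReal.lt_iff_exists_real_btwn.1 (lt_min (ENNReal.div_pos hc.ne' hM) one_pos)
  refine ⟨ξ, ENNReal.ofReal_pos.1 hξ0, ?_, ?_⟩
  · exact (ENNReal.ofReal_lt_one).1 (hξ.trans_le (min_le_right _ _))
  · exact (ENNReal.lt_div_iff_mul_lt (Or.inr ENNReal.ofReal_ne_top) (Or.inl hM)).1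
      (hξ.trans_le (min_le_left _ _))

theorem Isometry.dist_apply_lt_of_measure_compl_fixed_lt {X : Type*} [MetricSpace X]
    [MeasurableSpace X] {m : Measure X} {f : X → X} (hf : Isometry f) {y : X} {ρ : ℝ}
    {B : Set X} (hB : ball y ρ ⊆ B) (hmoved : m ({z | f z = z}ᶜ ∩ B) < m (ball y ρ)) :
    dist y (f y) < 2 * ρ := by
  obtain ⟨z, hzy, hfz⟩ : ∃ z ∈ ball y ρ, f z = z := by
    by_contra! hnone
    exact hmoved.not_ge (measure_mono fun z hz => ⟨hnone z hz, hB hz⟩)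
  calc dist y (f y) ≤ dist y z + dist (f z) (f y) := by rw [hfz]; exact dist_triangle y z (f y)
    _ = 2 * dist z y := by rw [hf.dist_eq, dist_comm]; ring
    _ < 2 * ρ := by linarith [mem_ball.1 hzy]

theorem big_fixed_point_sets_implies_small_subgroups_general
    {X : Type*} [MetricSpace X] [MeasurableSpace X]
    (m : Measure X) (hm0 : m ≠ 0)
    (hfin : ∀ s : Set X, Bornology.IsBounded s → m s ≠ ∞)
    (hsupp : ∀ U : Set X, IsOpen U → U.Nonempty → 0 < m U)
    (G : Subgroup (X ≃ᵢ X))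
    (hfix : ∀ (x : X) (s ξ' : ℝ), 0 < s → 0 < ξ' → ξ' < 1 →
      ∃ Λ : Subgroup (X ≃ᵢ X), Λ ≤ G ∧ Λ ≠ ⊥ ∧
        ∀ g ∈ Λ, m ({y | g y = y}ᶜ ∩ ball x s) ≤ ENNReal.ofReal ξ' * m (ball x s)) :
    HasSmallSubgroups G := by
  obtain ⟨x₀, -⟩ := nonempty_of_measure_ne_zero (Measure.measure_univ_ne_zero.2 hm0)
  refine hasSmallSubgroups_subgroup_of_nhds G fun U hU => ?_
  obtain ⟨⟨K, ε⟩, ⟨hK, hε⟩, hKU⟩ := (isoCompactOpen_nhds_one_hasBasis X).mem_iff.1 hU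
  obtain ⟨R, hR, hKR⟩ := hK.isBounded.subset_closedBall_lt 0 x₀
  obtain ⟨c, hc, hcK⟩ := hK.exists_pos_forall_le_measure_ball hsupp (half_pos hε)
  have hM : m (ball x₀ (R + ε / 2)) ≠ ∞ := hfin _ isBounded_ball
  obtain ⟨ξ', hξ0, hξ1, hξc⟩ := ENNReal.exists_ofReal_mul_lt hc hM
  obtain ⟨Λ, hΛG, hΛ, hΛfix⟩ := hfix x₀ (R + ε / 2) ξ' (by positivity) hξ0 hξ1
  refine ⟨Λ, hΛG, hΛ, fun g hg => hKU fun y hy => ?_⟩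
  have hball : ball y (ε / 2) ⊆ ball x₀ (R + ε / 2) :=
    ball_subset_ball' (by linarith [mem_closedBall.1 (hKR hy)])
  have hgy : dist y (g y) < 2 * (ε / 2) := g.isometry.dist_apply_lt_of_measure_compl_fixed_lt hball
    ((hΛfix g hg).trans_lt (hξc.trans_le (hcK y hy)))
  linarith

/-- Let `(X,d,m)` be a locally compact metric measure space satisfying
the ball condition, and `G` either `ISO(X)` or `ISO_m(X)`. If for every `x`, `s > 0` and
`0 < ξ' < 1` there is a nontrivial subgroup `Λ ≤ G` all of whose elements `g` satisfy
`m((X \ Fix g) ∩ B_s(x)) ≤ ξ' · m(B_s(x))`, then `G` has the small subgroup property. -/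
theorem big_fixed_point_sets_implies_small_subgroups
    {X : Type*} [MetricSpace X] [TopologicalSpace.SeparableSpace X] [CompleteSpace X]
    [LocallyCompactSpace X] [MeasurableSpace X] [BorelSpace X]
    (m : Measure X) (hm0 : m ≠ 0)
    (hfin : ∀ s : Set X, Bornology.IsBounded s → m s ≠ ∞)
    (hsupp : ∀ U : Set X, IsOpen U → U.Nonempty → 0 < m U)
    (hball : BallCondition X)
    (G : Subgroup (X ≃ᵢ X)) (hG : G = ⊤ ∨ G = isoMeasure m)
    (hfix : ∀ (x : X) (s ξ' : ℝ), 0 < s → 0 < ξ' → ξ' < 1 →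
      ∃ Λ : Subgroup (X ≃ᵢ X), Λ ≤ G ∧ Λ ≠ ⊥ ∧
        ∀ g ∈ Λ, m ({y | g y = y}ᶜ ∩ ball x s) ≤ ENNReal.ofReal ξ' * m (ball x s)) :
    HasSmallSubgroups G :=
  big_fixed_point_sets_implies_small_subgroups_general m hm0 hfin hsupp G hfix
end

section
/- Let (X,d,m) be a metric measure space such that for every μ_0, μ_1 ∈ P_2(X) with μ_0 absolutely continuous with respect to m, there exists a unique optimal geodesic plan π ∈ OptGeo(μ_0,μ_1), and moreover this π is concentrated on a Borel set Γ ⊂ Geo(X) on which the evaluation map e_0 : Γ → X is injective. Then every bijective isometry f of X with f ≠ id satisfies m(Fix(f)) = 0. -/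
open Metric MeasureTheory ENNReal Set

noncomputable section

/-- A (constant-speed, globally minimizing) geodesic parametrized by `[0,1]`. -/
def IsGeodesic {X : Type*} [MetricSpace X] (γ : C(unitInterval, X)) : Prop :=
  ∀ s t : unitInterval, dist (γ s) (γ t) = |(t : ℝ) - (s : ℝ)| * dist (γ 0) (γ 1)

/-- The space `Geo(X)` of geodesics of `X`, with the topology of uniform convergence
(the compact-open topology on `C([0,1], X)`). -/
abbrev Geo (X : Type*) [MetricSpace X] : Type _ := {γ : C(unitInterval, X) // IsGeodesic γ}

instance geoMeasurableSpace {X : Type*} [MetricSpace X] : MeasurableSpace (Geo X) :=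
  borel (Geo X)

instance geoBorelSpace {X : Type*} [MetricSpace X] : BorelSpace (Geo X) := ⟨rfl⟩

/-- Evaluation of a geodesic at time `t`. -/
def geoEval {X : Type*} [MetricSpace X] (t : unitInterval) (γ : Geo X) : X := γ.1 t

/-- The length of a geodesic. -/
def geoLen {X : Type*} [MetricSpace X] (γ : Geo X) : ℝ := dist (γ.1 0) (γ.1 1)

/-- A Borel probability measure has finite second moment. -/
def FiniteSecondMoment {X : Type*} [MetricSpace X] [MeasurableSpace X]
    (μ : Measure X) : Prop :=
  ∃ x₀ : X, ∫⁻ x, edist x x₀ ^ 2 ∂μ ≠ ∞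

/-- `pl` is a coupling of `μ₀` and `μ₁`. -/
def IsCoupling {X : Type*} [MetricSpace X] [MeasurableSpace X]
    (pl : Measure (X × X)) (μ₀ μ₁ : Measure X) : Prop :=
  pl.map Prod.fst = μ₀ ∧ pl.map Prod.snd = μ₁

/-- `pl` is an optimal plan between `μ₀` and `μ₁` for the quadratic cost. -/
def IsOptimalPlan {X : Type*} [MetricSpace X] [MeasurableSpace X]
    (pl : Measure (X × X)) (μ₀ μ₁ : Measure X) : Prop :=
  IsProbabilityMeasure pl ∧ IsCoupling pl μ₀ μ₁ ∧
    ∀ pl' : Measure (X × X), IsProbabilityMeasure pl' → IsCoupling pl' μ₀ μ₁ →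
      ∫⁻ p, edist p.1 p.2 ^ 2 ∂pl ≤ ∫⁻ p, edist p.1 p.2 ^ 2 ∂pl'

/-- `π ∈ OptGeo(μ₀, μ₁)` : an optimal geodesic plan between `μ₀` and `μ₁`. -/
def IsOptGeoPlan {X : Type*} [MetricSpace X] [MeasurableSpace X]
    (pln : Measure (Geo X)) (μ₀ μ₁ : Measure X) : Prop :=
  IsProbabilityMeasure pln ∧
    IsOptimalPlan (pln.map (fun γ => (geoEval 0 γ, geoEval 1 γ))) μ₀ μ₁

end

/-!
Suppose `m (Fix f) ≠ 0`, let `μ₀` be `m` conditioned on a bounded piece of `Fix f`, and pick `y`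
with `f y ≠ y`. For an optimal geodesic plan `π` from `μ₀` to `δ_y`, the average
`½ π + ½ f_# π` is an optimal geodesic plan from `μ₀` to `½ δ_y + ½ δ_{f y}`: on
`Fix f × {y, f y}` the cost `d(x, z)²` depends only on `x`, so every coupling is optimal.
By uniqueness this average is concentrated on a set where `e₀` is injective. Since `γ` and
`f ∘ γ` start at the same fixed point, `f ∘ γ = γ` for `π`-a.e. `γ`, and evaluating at time `1`
gives `f y = y`.
-/

open ProbabilityTheory

section Geodesics

variable {X : Type*} [MetricSpace X]

lemma continuous_geoEval (t : unitInterval) : Continuous (geoEval (X := X) t) :=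
  (continuous_eval_const t).comp continuous_subtype_val

def geoMap (f : X ≃ᵢ X) (γ : Geo X) : Geo X :=
  ⟨(⟨f, f.continuous⟩ : C(X, X)).comp γ.1, fun s t => by
    simpa only [ContinuousMap.comp_apply, ContinuousMap.coe_mk, f.dist_eq] using γ.2 s t⟩

lemma geoEval_geoMap (f : X ≃ᵢ X) (t : unitInterval) (γ : Geo X) :
    geoEval t (geoMap f γ) = f (geoEval t γ) := rfl

lemma continuous_geoMap (f : X ≃ᵢ X) : Continuous (geoMap f) :=
  ((ContinuousMap.continuous_postcomp _).comp continuous_subtype_val).subtype_mk _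

noncomputable def symmetrizePlan (f : X ≃ᵢ X) (π : Measure (Geo X)) : Measure (Geo X) :=
  (2⁻¹ : ℝ≥0∞) • π + (2⁻¹ : ℝ≥0∞) • π.map (geoMap f)

lemma ae_geoMap_eq_self (f : X ≃ᵢ X) {π : Measure (Geo X)} {Γ : Set (Geo X)}
    (hΓ : MeasurableSet Γ) (hinj : InjOn (geoEval 0) Γ) (hπΓ : symmetrizePlan f π Γᶜ = 0)
    (h₀ : ∀ᵐ γ ∂π, f (geoEval 0 γ) = geoEval 0 γ) :
    ∀ᵐ γ ∂π, geoMap f γ = γ := by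
  have hΓ' : ∀ᵐ γ ∂symmetrizePlan f π, γ ∈ Γ := ae_iff.2 hπΓ
  have htwo : (2⁻¹ : ℝ≥0∞) ≠ 0 := ENNReal.inv_ne_zero.2 ENNReal.ofNat_ne_top
  rw [symmetrizePlan, ae_add_measure_iff, Measure.ae_ennreal_smul_measure_iff htwo,
    Measure.ae_ennreal_smul_measure_iff htwo,
    ae_map_iff (p := (· ∈ Γ)) (continuous_geoMap f).aemeasurable hΓ] at hΓ'
  filter_upwards [hΓ'.1, hΓ'.2, h₀] with γ hγ hfγ hγ₀
  exact hinj hfγ hγ hγ₀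

variable [MeasurableSpace X] [BorelSpace X]

lemma measurable_geoEnds : Measurable fun γ : Geo X => (geoEval 0 γ, geoEval 1 γ) :=
  (continuous_geoEval 0).measurable.prodMk (continuous_geoEval 1).measurable

lemma map_geoEnds_geoMap (f : X ≃ᵢ X) (π : Measure (Geo X)) :
    (π.map (geoMap f)).map (fun γ => (geoEval 0 γ, geoEval 1 γ)) =
      (π.map fun γ => (geoEval 0 γ, geoEval 1 γ)).map (Prod.map f f) := by
  rw [Measure.map_map measurable_geoEnds (continuous_geoMap f).measurable,
    Measure.map_map (f.continuous.measurable.prodMap f.continuous.measurable) measurable_geoEnds]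
  rfl

end Geodesics

section Couplings

variable {X : Type*} [MetricSpace X] [MeasurableSpace X]
  {pl pl' : Measure (X × X)} {μ ν μ' ν' : Measure X}

lemma IsCoupling.add (h : IsCoupling pl μ ν) (h' : IsCoupling pl' μ' ν') :
    IsCoupling (pl + pl') (μ + μ') (ν + ν') :=
  ⟨by rw [Measure.map_add _ _ measurable_fst, h.1, h'.1],
    by rw [Measure.map_add _ _ measurable_snd, h.2, h'.2]⟩

lemma IsCoupling.smul (c : ℝ≥0∞) (h : IsCoupling pl μ ν) : IsCoupling (c • pl) (c • μ) (c • ν) :=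
  ⟨by rw [Measure.map_smul, h.1], by rw [Measure.map_smul, h.2]⟩

lemma IsCoupling.map_prodMap {f g : X → X} (hf : Measurable f) (hg : Measurable g)
    (h : IsCoupling pl μ ν) : IsCoupling (pl.map (Prod.map f g)) (μ.map f) (ν.map g) :=
  ⟨by rw [Measure.map_map measurable_fst (hf.prodMap hg), ← h.1,
      Measure.map_map hf measurable_fst]; rfl,
    by rw [Measure.map_map measurable_snd (hf.prodMap hg), ← h.2,
      Measure.map_map hg measurable_snd]; rfl⟩

lemma IsCoupling.ae_fst (h : IsCoupling pl μ ν) {p : X → Prop} (hp : ∀ᵐ x ∂μ, p x) :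
    ∀ᵐ q ∂pl, p q.1 :=
  ae_of_ae_map measurable_fst.aemeasurable (by rwa [h.1])

lemma IsCoupling.ae_snd (h : IsCoupling pl μ ν) {p : X → Prop} (hp : ∀ᵐ x ∂ν, p x) :
    ∀ᵐ q ∂pl, p q.2 :=
  ae_of_ae_map measurable_snd.aemeasurable (by rwa [h.2])

/-- `d(x, f y) = d(f x, f y) = d(x, y)` for a fixed point `x` of `f`. -/
lemma IsCoupling.lintegral_edist_sq_eq_of_fixed_orbit [OpensMeasurableSpace X] (f : X ≃ᵢ X)
    {y : X} (h₀ : ∀ᵐ x ∂μ, f x = x) (h₁ : ∀ᵐ z ∂ν, z = y ∨ z = f y) (h : IsCoupling pl μ ν) :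
    ∫⁻ q, edist q.1 q.2 ^ 2 ∂pl = ∫⁻ x, edist x y ^ 2 ∂μ := by
  have hcost : ∀ᵐ q ∂pl, edist q.1 q.2 ^ 2 = edist q.1 y ^ 2 := by
    filter_upwards [h.ae_fst h₀, h.ae_snd h₁] with q hq₁ hq₂
    rcases hq₂ with hq₂ | hq₂
    · rw [hq₂]
    · rw [hq₂, ← hq₁, f.edist_eq, hq₁]
  rw [lintegral_congr_ae hcost, ← h.1, lintegral_map (by fun_prop) measurable_fst]

lemma isOptimalPlan_of_fixed_orbit [OpensMeasurableSpace X] (f : X ≃ᵢ X) {y : X}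
    (h₀ : ∀ᵐ x ∂μ, f x = x) (h₁ : ∀ᵐ z ∂ν, z = y ∨ z = f y) [IsProbabilityMeasure pl]
    (h : IsCoupling pl μ ν) : IsOptimalPlan pl μ ν :=
  ⟨inferInstance, h, fun _ _ h' => by
    rw [h.lintegral_edist_sq_eq_of_fixed_orbit f h₀ h₁,
      h'.lintegral_edist_sq_eq_of_fixed_orbit f h₀ h₁]⟩

end Couplings

section OptGeoPlans

variable {X : Type*} [MetricSpace X] [MeasurableSpace X] [BorelSpace X]

lemma isOptGeoPlan_symmetrizePlan (f : X ≃ᵢ X) {π : Measure (Geo X)} {μ : Measure X} {y : X}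
    (hπ : IsOptGeoPlan π μ (Measure.dirac y)) (hμ : ∀ᵐ x ∂μ, f x = x) :
    IsOptGeoPlan (symmetrizePlan f π) μ
      ((2⁻¹ : ℝ≥0∞) • Measure.dirac y + (2⁻¹ : ℝ≥0∞) • Measure.dirac (f y)) := by
  obtain ⟨hπprob, -, hcpl, -⟩ := hπ
  have hf : Measurable f := f.continuous.measurable
  have hprob : IsProbabilityMeasure (symmetrizePlan f π) := by
    have := Measure.isProbabilityMeasure_map (μ := π) (continuous_geoMap f).measurable.aemeasurable
    constructor
    simp [symmetrizePlan, ENNReal.inv_two_add_inv_two]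
  have hμf : μ.map f = μ := by rw [Measure.map_congr hμ, Measure.map_id']
  have hsymm := (hcpl.smul (2⁻¹ : ℝ≥0∞)).add ((hcpl.map_prodMap hf hf).smul (2⁻¹ : ℝ≥0∞))
  rw [hμf, ← add_smul, ENNReal.inv_two_add_inv_two, one_smul, Measure.map_dirac' hf,
    ← map_geoEnds_geoMap, ← Measure.map_smul, ← Measure.map_smul,
    ← Measure.map_add _ _ measurable_geoEnds] at hsymm
  have hends : ∀ᵐ z ∂((2⁻¹ : ℝ≥0∞) • Measure.dirac y + (2⁻¹ : ℝ≥0∞) • Measure.dirac (f y)),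
      z = y ∨ z = f y := by
    simp
  have := Measure.isProbabilityMeasure_map (μ := symmetrizePlan f π)
    measurable_geoEnds.aemeasurable
  exact ⟨hprob, isOptimalPlan_of_fixed_orbit f hμ hends hsymm⟩

lemma fixed_of_symmetrizePlan_compl_eq_zero (f : X ≃ᵢ X) {π : Measure (Geo X)}
    {μ : Measure X} {y : X} (hπ : IsOptGeoPlan π μ (Measure.dirac y)) (hμ : ∀ᵐ x ∂μ, f x = x)
    {Γ : Set (Geo X)} (hΓ : MeasurableSet Γ) (hinj : InjOn (geoEval 0) Γ)
    (hπΓ : symmetrizePlan f π Γᶜ = 0) : f y = y := by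
  obtain ⟨hπprob, -, hcpl, -⟩ := hπ
  have h₀ : ∀ᵐ γ ∂π, f (geoEval 0 γ) = geoEval 0 γ :=
    ae_of_ae_map measurable_geoEnds.aemeasurable (hcpl.ae_fst hμ)
  have h₁ : ∀ᵐ γ ∂π, geoEval 1 γ = y :=
    ae_of_ae_map measurable_geoEnds.aemeasurable
      (hcpl.ae_snd ((ae_dirac_iff (measurableSet_singleton y)).2 rfl))
  have hfy : ∀ᵐ _ ∂π, f y = y := by
    filter_upwards [ae_geoMap_eq_self f hΓ hinj hπΓ h₀, h₁] with γ hγ hγ₁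
    rw [← hγ₁, ← geoEval_geoMap, hγ]
  exact Filter.eventually_const.1 hfy

end OptGeoPlans

lemma exists_measure_inter_ball_ne_zero {X : Type*} [PseudoMetricSpace X] [MeasurableSpace X]
    {μ : Measure X} {s : Set X} (hs : μ s ≠ 0) (x₀ : X) : ∃ n : ℕ, μ (s ∩ ball x₀ n) ≠ 0 := by
  by_contra! h
  exact hs (by rw [← inter_univ s, ← iUnion_ball_nat x₀, inter_iUnion]; exact measure_iUnion_null h)

lemma finiteSecondMoment_of_ae_mem {X : Type*} [MetricSpace X] [MeasurableSpace X] [Nonempty X]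
    {μ : Measure X} [IsFiniteMeasure μ] {s : Set X} (hs : Bornology.IsBounded s)
    (hμs : ∀ᵐ x ∂μ, x ∈ s) : FiniteSecondMoment μ := by
  let x₀ : X := Classical.arbitrary X
  obtain ⟨r, hr⟩ := hs.subset_closedBall x₀
  refine ⟨x₀, ne_top_of_le_ne_top (b := ENNReal.ofReal r ^ 2 * μ univ) (by finiteness) ?_⟩
  calc ∫⁻ x, edist x x₀ ^ 2 ∂μ ≤ ∫⁻ _, ENNReal.ofReal r ^ 2 ∂μ :=
        lintegral_mono_ae <| hμs.mono fun x hx => by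
          gcongr
          exact (edist_le_ofReal (dist_nonneg.trans (hr hx))).2 (hr hx)
    _ = ENNReal.ofReal r ^ 2 * μ univ := lintegral_const _

theorem fixed_points_null_of_unique_optimal_plans_general
    {X : Type*} [MetricSpace X]
    [MeasurableSpace X] [BorelSpace X]
    (m : Measure X)
    (hfin : ∀ s : Set X, Bornology.IsBounded s → m s ≠ ∞)
    (H : ∀ μ₀ μ₁ : Measure X, IsProbabilityMeasure μ₀ → IsProbabilityMeasure μ₁ →
      FiniteSecondMoment μ₀ → FiniteSecondMoment μ₁ → μ₀ ≪ m →
      ∃ pln : Measure (Geo X), IsOptGeoPlan pln μ₀ μ₁ ∧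
        (∀ pln' : Measure (Geo X), IsOptGeoPlan pln' μ₀ μ₁ → pln' = pln) ∧
        ∃ Γ : Set (Geo X), MeasurableSet Γ ∧ pln Γᶜ = 0 ∧
          Set.InjOn (geoEval 0) Γ)
    (f : X ≃ᵢ X) (hf : f ≠ 1) :
    m {x : X | f x = x} = 0 := by
  by_contra hfix
  obtain ⟨y, hy⟩ : ∃ y, f y ≠ y := by
    contrapose! hf
    exact IsometryEquiv.ext hf
  have : Nonempty X := ⟨y⟩
  obtain ⟨n, hn⟩ := exists_measure_inter_ball_ne_zero hfix y
  set S := {x : X | f x = x} ∩ ball y n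
  have hS : MeasurableSet S :=
    (isClosed_fixedPoints f.continuous).measurableSet.inter measurableSet_ball
  have hSbdd : Bornology.IsBounded S := isBounded_ball.subset inter_subset_right
  have hμ₀ : IsProbabilityMeasure m[|S] := cond_isProbabilityMeasure_of_finite hn (hfin S hSbdd)
  have hμ₀fix : ∀ᵐ x ∂m[|S], f x = x := (ae_cond_mem hS).mono fun x hx => hx.1
  have hμ₀mom := finiteSecondMoment_of_ae_mem hSbdd (ae_cond_mem (μ := m) hS)
  obtain ⟨π, hπ, -⟩ := H _ (Measure.dirac y) hμ₀ inferInstance hμ₀mom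
    (finiteSecondMoment_of_ae_mem Bornology.isBounded_singleton
      ((ae_dirac_iff (measurableSet_singleton y)).2 rfl)) cond_absolutelyContinuous
  set μ₁ := (2⁻¹ : ℝ≥0∞) • Measure.dirac y + (2⁻¹ : ℝ≥0∞) • Measure.dirac (f y)
  have hμ₁ : IsProbabilityMeasure μ₁ := ⟨by simp [μ₁, ENNReal.inv_two_add_inv_two]⟩
  have hμ₁mom : FiniteSecondMoment μ₁ :=
    finiteSecondMoment_of_ae_mem (s := {y, f y}) (toFinite _).isBounded (by simp [μ₁])
  obtain ⟨pln, -, huniq, Γ, hΓ, hplnΓ, hinj⟩ :=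
    H _ μ₁ hμ₀ hμ₁ hμ₀mom hμ₁mom cond_absolutelyContinuous
  rw [← huniq _ (isOptGeoPlan_symmetrizePlan f hπ hμ₀fix)] at hplnΓ
  exact hy (fixed_of_symmetrizePlan_compl_eq_zero f hπ hμ₀fix hΓ hinj hplnΓ)

/-- If between any `μ₀ ≪ m` and any `μ₁` in `P₂(X)` there is a unique
optimal geodesic plan, concentrated on a Borel set of geodesics on which `e₀` is
injective, then every nontrivial isometry has fixed point set of `m`-measure zero. -/
theorem fixed_points_null_of_unique_optimal_plans
    {X : Type*} [MetricSpace X] [TopologicalSpace.SeparableSpace X] [CompleteSpace X]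
    [MeasurableSpace X] [BorelSpace X]
    (m : Measure X) (hm0 : m ≠ 0)
    (hfin : ∀ s : Set X, Bornology.IsBounded s → m s ≠ ∞)
    (hsupp : ∀ U : Set X, IsOpen U → U.Nonempty → 0 < m U)
    (H : ∀ μ₀ μ₁ : Measure X, IsProbabilityMeasure μ₀ → IsProbabilityMeasure μ₁ →
      FiniteSecondMoment μ₀ → FiniteSecondMoment μ₁ → μ₀ ≪ m →
      ∃ pln : Measure (Geo X), IsOptGeoPlan pln μ₀ μ₁ ∧
        (∀ pln' : Measure (Geo X), IsOptGeoPlan pln' μ₀ μ₁ → pln' = pln) ∧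
        ∃ Γ : Set (Geo X), MeasurableSet Γ ∧ pln Γᶜ = 0 ∧
          Set.InjOn (geoEval 0) Γ)
    (f : X ≃ᵢ X) (hf : f ≠ 1) :
    m {x : X | f x = x} = 0 :=
  fixed_points_null_of_unique_optimal_plans_general m hfin H f hf
end

section
/- For every k ≥ 1 and every subgroup H of the isometry group of Euclidean space ℝ^k (with the Euclidean metric) with H ≠ {id}, one has sup_{g ∈ H} sup_{y ∈ B(0,1/2)} |g(y) − y| > 1/20, where B(0,1/2) is the open ball of radius 1/2 around the origin. -/
open Metric ENNReal Set

/-- No nontrivial subgroup of the isometry group of Euclidean space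
`ℝᵏ` (`k ≥ 1`) displaces every point of the open ball `B(0, 1/2)` by at most `1/20`:
the supremum `sup_{g ∈ H} sup_{y ∈ B(0,1/2)} |g y − y|` exceeds `1/20`. -/
theorem euclidean_isometry_group_no_small_subgroups
    (k : ℕ) (hk : 1 ≤ k)
    (H : Subgroup (EuclideanSpace ℝ (Fin k) ≃ᵢ EuclideanSpace ℝ (Fin k)))
    (hH : H ≠ ⊥) :
    (1 / 20 : ℝ≥0∞) <
      ⨆ g ∈ H, ⨆ y ∈ ball (0 : EuclideanSpace ℝ (Fin k)) (1 / 2), edist (g y) y := by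
  set E := EuclideanSpace ℝ (Fin k) with hE
  by_contra hle
  push_neg at hle
  -- every element of H moves every point of the ball by at most 1/20
  have hball : ∀ h : E ≃ᵢ E, h ∈ H → ∀ y : E, ‖y‖ < 1 / 2 → ‖h y - y‖ ≤ 1 / 20 := by
    intro h hh y hy
    have h1 : edist (h y) y ≤ (1 / 20 : ℝ≥0∞) := by
      refine le_trans ?_ hle
      exact le_iSup₂_of_le h hh
        (le_iSup₂_of_le y (by simpa [mem_ball, dist_eq_norm] using hy) le_rfl)
    have h2 : edist (h y) y ≤ ENNReal.ofReal (1 / 20) := by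
      convert h1
      rw [ENNReal.ofReal_div_of_pos (by norm_num)]
      norm_num
    rw [edist_le_ofReal (by norm_num)] at h2
    rwa [dist_eq_norm] at h2
  -- pick a nontrivial element of H
  obtain ⟨⟨g, hgH⟩, hg1⟩ := Subgroup.ne_bot_iff_exists_ne_one.1 hH
  have hg1' : g ≠ 1 := by
    intro h
    exact hg1 (Subtype.ext h)
  obtain ⟨x₀, hx₀⟩ : ∃ x : E, g x ≠ x := by
    by_contra h
    push_neg at h
    exact hg1' (IsometryEquiv.ext h)
  -- the linear part of g (Mazur–Ulam)
  set L : E →ₗ[ℝ] E := (g.toRealLinearIsometryEquiv.toLinearEquiv : E →ₗ[ℝ] E) with hLdef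
  have hL : ∀ x : E, L x = g x - g 0 := fun x =>
    g.toRealLinearIsometryEquiv_apply x
  have hdiff : ∀ p q : E, g p - g q = L (p - q) := by
    intro p q
    rw [map_sub, hL, hL]
    abel
  have hgnH : ∀ n : ℕ, g ^ n ∈ H := fun n => pow_mem hgH n
  -- powers of g have linear part L^n
  have hpow : ∀ (n : ℕ) (z : E), (g ^ n) z - (g ^ n) 0 = (L ^ n) z := by
    intro n
    induction n with
    | zero => intro z; simp
    | succ n ih =>
      intro z
      rw [pow_succ' g n, pow_succ' L n, Module.End.mul_apply, ← ih z,
        IsometryEquiv.mul_apply, IsometryEquiv.mul_apply, ← hdiff]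
  -- L^n moves every vector by at most (2/9) of its norm
  have hsmall : ∀ (n : ℕ) (z : E), ‖(L ^ n) z - z‖ ≤ 2 / 9 * ‖z‖ := by
    intro n z
    rcases eq_or_ne z 0 with rfl | hz
    · simp
    have hznorm : (0 : ℝ) < ‖z‖ := norm_pos_iff.2 hz
    set c : ℝ := 9 / (20 * ‖z‖) with hc
    have hcpos : 0 < c := by positivity
    have hcz : ‖c • z‖ = 9 / 20 := by
      rw [norm_smul, Real.norm_eq_abs, abs_of_pos hcpos, hc]
      field_simp
    have hyb : ‖c • z‖ < 1 / 2 := by rw [hcz]; norm_num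
    have h1 := hball (g ^ n) (hgnH n) (c • z) hyb
    have h0 := hball (g ^ n) (hgnH n) 0 (by norm_num)
    simp only [sub_zero] at h0
    have key : ‖(L ^ n) (c • z) - c • z‖ ≤ 1 / 10 := by
      have : (L ^ n) (c • z) - c • z =
          ((g ^ n) (c • z) - c • z) - ((g ^ n) 0) := by
        rw [← hpow n (c • z)]; abel
      rw [this]
      calc ‖((g ^ n) (c • z) - c • z) - ((g ^ n) 0)‖
          ≤ ‖(g ^ n) (c • z) - c • z‖ + ‖(g ^ n) 0‖ := norm_sub_le _ _
        _ ≤ 1 / 20 + 1 / 20 := add_le_add h1 h0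
        _ = 1 / 10 := by norm_num
    have hlin : (L ^ n) (c • z) - c • z = c • ((L ^ n) z - z) := by
      rw [map_smul, smul_sub]
    rw [hlin, norm_smul, Real.norm_eq_abs, abs_of_pos hcpos] at key
    have : ‖(L ^ n) z - z‖ ≤ (1 / 10) / c := by
      rw [le_div_iff₀ hcpos, mul_comm]
      exact key
    refine this.trans (le_of_eq ?_)
    rw [hc]
    field_simp
    ring
  -- the displacement vector
  set w : E := g x₀ - x₀ with hw
  have hwne : w ≠ 0 := sub_ne_zero.2 hx₀
  have hwnorm : (0 : ℝ) < ‖w‖ := norm_pos_iff.2 hwne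
  -- telescoping
  have htel : ∀ n : ℕ, (g ^ n) x₀ - x₀ = ∑ j ∈ Finset.range n, (L ^ j) w := by
    intro n
    induction n with
    | zero => simp
    | succ n ih =>
      rw [Finset.sum_range_succ']
      have : (g ^ (n + 1)) x₀ - x₀ = L ((g ^ n) x₀ - x₀) + w := by
        rw [← hdiff]
        rw [pow_succ' g n, IsometryEquiv.mul_apply, hw]
        abel
      rw [this, ih, map_sum]
      simp only [pow_zero, Module.End.one_apply]
      congr 1
      apply Finset.sum_congr rfl
      intro j _
      rw [pow_succ' L j, Module.End.mul_apply]
  -- lower bound on the displacement of g^n at x₀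
  have hlower : ∀ n : ℕ, 7 / 9 * n * ‖w‖ ≤ ‖(g ^ n) x₀ - x₀‖ := by
    intro n
    rw [htel n]
    have hsplit : ∑ j ∈ Finset.range n, (L ^ j) w
        = n • w + ∑ j ∈ Finset.range n, ((L ^ j) w - w) := by
      rw [Finset.sum_sub_distrib, Finset.sum_const, Finset.card_range]
      abel
    have hD : ‖∑ j ∈ Finset.range n, ((L ^ j) w - w)‖ ≤ n * (2 / 9 * ‖w‖) := by
      calc ‖∑ j ∈ Finset.range n, ((L ^ j) w - w)‖
          ≤ ∑ j ∈ Finset.range n, ‖(L ^ j) w - w‖ := norm_sum_le _ _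
        _ ≤ ∑ _j ∈ Finset.range n, (2 / 9 * ‖w‖) :=
            Finset.sum_le_sum (fun j _ => hsmall j w)
        _ = n * (2 / 9 * ‖w‖) := by
            rw [Finset.sum_const, Finset.card_range, nsmul_eq_mul]
    have hnw : ‖(n : ℕ) • w‖ = n * ‖w‖ := by
      rw [← Nat.cast_smul_eq_nsmul ℝ n w, norm_smul, Real.norm_natCast]
    calc (7 : ℝ) / 9 * n * ‖w‖
        = n * ‖w‖ - n * (2 / 9 * ‖w‖) := by ring
      _ ≤ ‖n • w‖ - ‖∑ j ∈ Finset.range n, ((L ^ j) w - w)‖ := by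
          rw [hnw]; linarith [hD]
      _ ≤ ‖n • w + ∑ j ∈ Finset.range n, ((L ^ j) w - w)‖ := by
          have h := norm_sub_le (n • w + ∑ j ∈ Finset.range n, ((L ^ j) w - w))
            (∑ j ∈ Finset.range n, ((L ^ j) w - w))
          simp only [add_sub_cancel_right] at h
          linarith
      _ = ‖∑ j ∈ Finset.range n, (L ^ j) w‖ := by rw [← hsplit]
  -- upper bound on the displacement of g^n at x₀
  have hupper : ∀ n : ℕ, ‖(g ^ n) x₀ - x₀‖ ≤ 2 * ‖x₀‖ + 1 / 20 := by
    intro n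
    have hiso : ‖(g ^ n) x₀ - (g ^ n) 0‖ = ‖x₀‖ := by
      rw [← dist_eq_norm, (g ^ n).dist_eq, dist_eq_norm, sub_zero]
    have h0 := hball (g ^ n) (hgnH n) 0 (by norm_num)
    simp only [sub_zero] at h0
    calc ‖(g ^ n) x₀ - x₀‖
        = ‖((g ^ n) x₀ - (g ^ n) 0) + ((g ^ n) 0) + (-x₀)‖ := by
          congr 1; abel
      _ ≤ ‖(g ^ n) x₀ - (g ^ n) 0‖ + ‖(g ^ n) 0‖ + ‖-x₀‖ :=
          norm_add₃_le
      _ ≤ ‖x₀‖ + 1 / 20 + ‖x₀‖ := by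
          rw [hiso, norm_neg]; linarith [h0]
      _ = 2 * ‖x₀‖ + 1 / 20 := by ring
  -- contradiction for large n
  obtain ⟨n, hn⟩ := exists_nat_gt ((2 * ‖x₀‖ + 1 / 20) * 9 / (7 * ‖w‖))
  have h1 := hlower n
  have h2 := hupper n
  have : (2 * ‖x₀‖ + 1 / 20) * 9 / (7 * ‖w‖) * (7 / 9 * ‖w‖) < n * (7 / 9 * ‖w‖) := by
    apply mul_lt_mul_of_pos_right hn
    positivity
  rw [div_mul_eq_mul_div, mul_comm] at this
  have hx : (2 * ‖x₀‖ + 1 / 20) < 7 / 9 * n * ‖w‖ := by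
    have heq : (7 / 9 * ‖w‖) * ((2 * ‖x₀‖ + 1 / 20) * 9) / (7 * ‖w‖)
        = 2 * ‖x₀‖ + 1 / 20 := by
      field_simp
    rw [heq] at this
    calc (2 * ‖x₀‖ + 1 / 20) < n * (7 / 9 * ‖w‖) := this
      _ = 7 / 9 * n * ‖w‖ := by ring
  linarith
end
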